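/- arXiv:1105.0985 — 4 statements merged into one kernel-verified Lean document; each statement's English description precedes it below -/
import Mathlib

section
/- Fix r_0 in (0, 1/2) and x_0 in T^2. There are only finitely many directions e in S^1 for which there exists a half-line in T^2 in direction e that does not intersect the ball B(x_0, r_0/8). -/
/-!
Suppose the half-line from `x` in direction `e` avoids the ball of radius `r` around `x₀`, and
`|e₂| ≤ |e₁|`. At the times when the first coordinate of the half-line equals that of `x₀`, its
second coordinate runs through an orbit `c + n α` (`n ∈ ℕ`) on the circle, with `α = ±e₂/e₁`.
By Dirichlet's approximation theorem some `k ≤ ⌈1/r⌉` has `k α` within `r` of an integer; unless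
`k α` is an integer, the multiples of `k` move the orbit by steps shorter than `r` and it enters
the ball. Hence `e` lies on a line `a e₂ = b e₁` with integers `|a|, |b| ≤ ⌈1/r⌉`, and each of
these finitely many lines meets the unit circle in two points.
-/

/-- The two-dimensional torus `ℝ²/ℤ²`. -/
abbrev Torus2 : Type := AddCircle (1 : ℝ) × AddCircle (1 : ℝ)

/-- The canonical surjection `s : ℝ² → T²`. -/
noncomputable def torusProj (x : ℝ × ℝ) : Torus2 := ((x.1 : AddCircle (1 : ℝ)), (x.2 : AddCircle (1 : ℝ)))

lemma torusProj_add (u v : ℝ × ℝ) : torusProj (u + v) = torusProj u + torusProj v := by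
  simp [torusProj]

lemma torusProj_surjective : Function.Surjective torusProj :=
  QuotientAddGroup.mk_surjective.prodMap QuotientAddGroup.mk_surjective

lemma UnitAddCircle.norm_coe_le_abs_sub_intCast (x : ℝ) (n : ℤ) :
    ‖(x : UnitAddCircle)‖ ≤ |x - n| := by
  rw [UnitAddCircle.norm_eq]
  exact round_le x n

lemma UnitAddCircle.exists_nat_norm_coe_add_mul_le (c : ℝ) {d : ℝ} (hd : d ≠ 0) :
    ∃ m : ℕ, ‖((c + m * d : ℝ) : UnitAddCircle)‖ ≤ |d| := by
  wlog hd_pos : 0 < d generalizing c d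
  · obtain ⟨m, hm⟩ := this (-c) (neg_ne_zero.2 hd) (by grind)
    refine ⟨m, ?_⟩
    rwa [← abs_neg d, ← norm_neg, ← AddCircle.coe_neg, neg_add, ← mul_neg]
  obtain ⟨m, hm⟩ : ∃ m : ℕ, m = ⌈(⌈c⌉ - c) / d⌉₊ := ⟨_, rfl⟩
  have h_ge : (⌈c⌉ - c) / d ≤ m := hm ▸ Nat.le_ceil _
  have h_lt : (m : ℝ) < (⌈c⌉ - c) / d + 1 :=
    hm ▸ Nat.ceil_lt_add_one (div_nonneg (by linarith [Int.le_ceil c]) hd_pos.le)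
  rw [div_le_iff₀ hd_pos] at h_ge
  rw [← sub_lt_iff_lt_add, lt_div_iff₀ hd_pos] at h_lt
  refine ⟨m, (norm_coe_le_abs_sub_intCast _ ⌈c⌉).trans ?_⟩
  rw [abs_of_pos hd_pos, abs_le]
  constructor <;> nlinarith

lemma UnitAddCircle.exists_nat_mul_eq_intCast_of_forall_le_norm {r : ℝ} (hr : 0 < r) {c α : ℝ}
    (h : ∀ n : ℕ, r ≤ ‖((c + n * α : ℝ) : UnitAddCircle)‖) :
    ∃ q : ℕ, 0 < q ∧ q ≤ ⌈1 / r⌉₊ ∧ ∃ p : ℤ, q * α = p := by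
  have hN : 0 < ⌈1 / r⌉₊ := Nat.ceil_pos.2 (by positivity)
  obtain ⟨k, hk_pos, hkN, hk⟩ := Real.exists_nat_abs_mul_sub_round_le α hN
  refine ⟨k, hk_pos, hkN, round (k * α), ?_⟩
  by_contra hne
  set d := k * α - round (k * α)
  have hd : d ≠ 0 := sub_ne_zero.2 hne
  have hdr : |d| < r := by
    refine hk.trans_lt ((div_lt_iff₀ (by positivity)).2 ?_)
    have := Nat.le_ceil (1 / r)
    rw [div_le_iff₀ hr] at this
    nlinarith
  obtain ⟨m, hm⟩ := exists_nat_norm_coe_add_mul_le c hd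
  have hcoe : ((c + (m * k : ℕ) * α : ℝ) : UnitAddCircle) = (c + m * d : ℝ) := by
    rw [show c + (m * k : ℕ) * α = c + m * d + ((m * round (k * α) : ℤ) : ℝ) by
      push_cast; ring]
    simp [-Int.cast_mul]
  exact (h (m * k)).not_gt (hcoe ▸ hm.trans_lt hdr)

lemma exists_int_mul_eq_of_forall_le_max_norm_of_pos {r : ℝ} (hr : 0 < r) {y₁ y₂ e₁ e₂ : ℝ}
    (he₁ : 0 < e₁) (he : |e₂| ≤ e₁)
    (h : ∀ t : ℝ, 0 ≤ t →
      r ≤ max ‖((y₁ + t * e₁ : ℝ) : UnitAddCircle)‖ ‖((y₂ + t * e₂ : ℝ) : UnitAddCircle)‖) :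
    ∃ p q : ℤ, 0 < q ∧ q ≤ ⌈1 / r⌉₊ ∧ |p| ≤ q ∧ q * e₂ = p * e₁ := by
  set α := e₂ / e₁
  -- at the times `t` at which `y₁ + t e₁` is an integer, `y₂ + t e₂` runs through an `α`-orbit
  have horbit : ∀ n : ℕ, r ≤ ‖((y₂ + (⌈y₁⌉ - y₁) * α + n * α : ℝ) : UnitAddCircle)‖ := by
    intro n
    set t := (⌈y₁⌉ + n - y₁) / e₁
    have ht : 0 ≤ t := div_nonneg (by linarith [Int.le_ceil y₁, n.cast_nonneg (α := ℝ)]) he₁.le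
    have h₁ : y₁ + t * e₁ = ((⌈y₁⌉ + n : ℤ) : ℝ) := by
      simp only [t]
      push_cast
      field_simp
      ring
    have h₀ : (((⌈y₁⌉ + n : ℤ) : ℝ) : UnitAddCircle) = 0 :=
      (AddCircle.coe_eq_zero_iff 1).2 ⟨⌈y₁⌉ + n, by simp⟩
    have h₂ : y₂ + t * e₂ = y₂ + (⌈y₁⌉ - y₁) * α + n * α := by
      simp only [t, α]
      field_simp
      ring
    have := h t ht
    rwa [h₁, h₂, h₀, norm_zero, max_eq_right (norm_nonneg _)] at this
  obtain ⟨q, hq_pos, hqN, p, hp⟩ :=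
    UnitAddCircle.exists_nat_mul_eq_intCast_of_forall_le_norm hr horbit
  have hα : |α| ≤ 1 := by
    rw [abs_div, abs_of_pos he₁]
    exact div_le_one_of_le₀ he he₁.le
  refine ⟨p, q, by exact_mod_cast hq_pos, by exact_mod_cast hqN, ?_, ?_⟩
  · have : |(p : ℝ)| ≤ q := by
      rw [← hp, abs_mul, Nat.abs_cast]
      exact mul_le_of_le_one_right q.cast_nonneg hα
    exact_mod_cast this
  · simp only [α] at hp
    field_simp at hp
    push_cast
    linarith

lemma exists_int_mul_eq_of_forall_le_max_norm {r : ℝ} (hr : 0 < r) {y₁ y₂ e₁ e₂ : ℝ}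
    (he₁ : e₁ ≠ 0) (he : |e₂| ≤ |e₁|)
    (h : ∀ t : ℝ, 0 ≤ t →
      r ≤ max ‖((y₁ + t * e₁ : ℝ) : UnitAddCircle)‖ ‖((y₂ + t * e₂ : ℝ) : UnitAddCircle)‖) :
    ∃ p q : ℤ, 0 < q ∧ q ≤ ⌈1 / r⌉₊ ∧ |p| ≤ q ∧ q * e₂ = p * e₁ := by
  rcases he₁.lt_or_gt with he_neg | he_pos
  · -- the hypothesis is invariant under `(y₁, e₁) ↦ (-y₁, -e₁)`
    obtain ⟨p, q, hq, hqN, hpq, heq⟩ :=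
      exists_int_mul_eq_of_forall_le_max_norm_of_pos hr (y₁ := -y₁) (neg_pos.2 he_neg)
        (by rwa [abs_of_neg he_neg] at he) fun t ht => by
          rw [show -y₁ + t * -e₁ = -(y₁ + t * e₁) by ring, AddCircle.coe_neg, norm_neg]
          exact h t ht
    exact ⟨-p, q, hq, hqN, by rwa [abs_neg], by push_cast; linarith⟩
  · exact exists_int_mul_eq_of_forall_le_max_norm_of_pos hr he_pos
      (by rwa [abs_of_pos he_pos] at he) h

lemma exists_int_mul_eq_mul_of_forall_le_norm_torusProj {r : ℝ} (hr : 0 < r) {y e : ℝ × ℝ}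
    (he : e.1 ^ 2 + e.2 ^ 2 = 1) (h : ∀ t : ℝ, 0 ≤ t → r ≤ ‖torusProj (y + t • e)‖) :
    ∃ a b : ℤ, (a ≠ 0 ∨ b ≠ 0) ∧ |a| ≤ ⌈1 / r⌉₊ ∧ |b| ≤ ⌈1 / r⌉₊ ∧ a * e.2 = b * e.1 := by
  rcases le_total |e.2| |e.1| with h21 | h12
  · have he₁ : e.1 ≠ 0 := by
      rintro h0
      rw [h0, abs_zero, abs_nonpos_iff] at h21
      simp [h0, h21] at he
    obtain ⟨p, q, hq, hqN, hpq, heq⟩ := exists_int_mul_eq_of_forall_le_max_norm hr he₁ h21 h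
    exact ⟨q, p, .inl hq.ne', by rwa [abs_of_pos hq], hpq.trans hqN, heq⟩
  · have he₂ : e.2 ≠ 0 := by
      rintro h0
      rw [h0, abs_zero, abs_nonpos_iff] at h12
      simp [h0, h12] at he
    obtain ⟨p, q, hq, hqN, hpq, heq⟩ :=
      exists_int_mul_eq_of_forall_le_max_norm hr he₂ h12 fun t ht => by rw [max_comm]; exact h t ht
    exact ⟨p, q, .inr hq.ne', hpq.trans hqN, by rwa [abs_of_pos hq], heq.symm⟩

lemma finite_setOf_sq_add_sq_eq_one_and_mul_eq_mul {a b : ℝ} (hab : a ≠ 0 ∨ b ≠ 0) :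
    {e : ℝ × ℝ | e.1 ^ 2 + e.2 ^ 2 = 1 ∧ a * e.2 = b * e.1}.Finite := by
  set n := a ^ 2 + b ^ 2
  have hn : 0 < n := by rcases hab with h | h <;> positivity
  refine (((Set.finite_singleton √n).insert (-√n)).image
    fun s => (s / n * a, s / n * b)).subset ?_
  rintro e ⟨he, hline⟩
  set s := a * e.1 + b * e.2
  -- Lagrange's identity: `s² + (a e₂ - b e₁)² = (a² + b²)(e₁² + e₂²)`
  have hs : s ^ 2 = √n ^ 2 := by
    rw [Real.sq_sqrt hn.le]
    linear_combination n * he - (a * e.2 - b * e.1) * hline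
  refine ⟨s, by simpa [or_comm] using sq_eq_sq_iff_eq_or_eq_neg.1 hs, ?_⟩
  ext <;> field_simp
  · linear_combination b * hline
  · linear_combination -a * hline

theorem finite_setOf_halfLine_not_mem_ball (x₀ : Torus2) {r : ℝ} (hr : 0 < r) :
    {e : ℝ × ℝ | e.1 ^ 2 + e.2 ^ 2 = 1 ∧
      ∃ x : Torus2, ∀ t : ℝ, 0 ≤ t → x + torusProj (t • e) ∉ Metric.ball x₀ r}.Finite := by
  set N : ℤ := (⌈1 / r⌉₊ : ℤ)
  have hbox : {ab : ℤ × ℤ | (ab.1 ≠ 0 ∨ ab.2 ≠ 0) ∧ |ab.1| ≤ N ∧ |ab.2| ≤ N}.Finite :=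
    ((Set.finite_Icc (-N) N).prod (Set.finite_Icc (-N) N)).subset
      fun ab ⟨_, h₁, h₂⟩ => ⟨abs_le.1 h₁, abs_le.1 h₂⟩
  refine (hbox.biUnion fun ab hab => finite_setOf_sq_add_sq_eq_one_and_mul_eq_mul
    (a := ab.1) (b := ab.2) (by exact_mod_cast hab.1)).subset ?_
  rintro e ⟨he, x, hx⟩
  obtain ⟨y, hy⟩ := torusProj_surjective (x - x₀)
  have h : ∀ t : ℝ, 0 ≤ t → r ≤ ‖torusProj (y + t • e)‖ := fun t ht => by
    simpa [dist_eq_norm, add_sub_right_comm, ← hy, torusProj_add] using hx t ht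
  obtain ⟨a, b, hab, ha, hb, hline⟩ := exists_int_mul_eq_mul_of_forall_le_norm_torusProj hr he h
  exact Set.mem_biUnion (x := (a, b)) ⟨hab, ha, hb⟩ ⟨he, hline⟩

theorem statement4_general (x₀ : Torus2) (r₀ : ℝ) (hr₀ : 0 < r₀) :
    {e : ℝ × ℝ | e.1 ^ 2 + e.2 ^ 2 = 1 ∧
      ∃ x : Torus2, ∀ t : ℝ, 0 ≤ t →
        x + torusProj (t • e) ∉ Metric.ball x₀ (r₀ / 8)}.Finite :=
  finite_setOf_halfLine_not_mem_ball x₀ (by positivity)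

/-- There are only finitely many unit directions `e` for which some half-line of `T²`
in direction `e` avoids the ball `B(x₀, r₀/8)`. -/
theorem statement4 (x₀ : Torus2) (r₀ : ℝ) (hr₀ : 0 < r₀) (hr₀' : r₀ < 1 / 2) :
    {e : ℝ × ℝ | e.1 ^ 2 + e.2 ^ 2 = 1 ∧
      ∃ x : Torus2, ∀ t : ℝ, 0 ≤ t →
        x + torusProj (t • e) ∉ Metric.ball x₀ (r₀ / 8)}.Finite :=
  statement4_general x₀ r₀ hr₀
end

section
/- Let W : T^2 -> R^2 be a continuous nonvanishing vector field with |W(x)| >= c > 0 for all x. Let Λ in C^∞_0((0,1); R) be nonnegative with integral 1, and for τ' > 0 and C > 0 set E(t,x) := (C/τ') Λ(t/τ') W(x). Let (X,V) solve X'=V, V'=E(t,X), X(0)=x, V(0)=v. If W is Lipschitz and M > 0 is given, then for all sufficiently large C and then sufficiently small τ', for every (x,v) in T^2 x B(0,M): |V(τ')| >= M + 1, i.e. the impulsive field E accelerates all particles of initial speed at most M to speed at least M+1 by time τ'. -/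
open Set

/-- Acceleration by an impulsive gradient-like field: if `W` is a Lipschitz, bounded vector
field with `‖W‖ ≥ c > 0` and `E(t,x) = (C/τ') Λ(t/τ') W(x)` with `Λ ≥ 0` smooth, supported in
`(0,1)`, of integral `1`, then for `C` large enough and then `τ'` small enough, every particle
of initial speed at most `M` has speed at least `M + 1` at time `τ'`. -/
theorem statement10 (W : EuclideanSpace ℝ (Fin 2) → EuclideanSpace ℝ (Fin 2))
    (LW : NNReal) (hWlip : LipschitzWith LW W)
    (c : ℝ) (hc : 0 < c) (hWlow : ∀ x, c ≤ ‖W x‖)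
    (Cb : ℝ) (hWb : ∀ x, ‖W x‖ ≤ Cb)
    (Λ : ℝ → ℝ) (hΛsmooth : ContDiff ℝ (⊤ : ℕ∞) Λ) (hΛsupp : Function.support Λ ⊆ Ioo (0:ℝ) 1)
    (hΛpos : ∀ t, 0 ≤ Λ t) (hΛint : ∫ t in (0:ℝ)..1, Λ t = 1)
    (M : ℝ) (hM : 0 < M) :
    ∃ C₀ > (0:ℝ), ∀ C : ℝ, C₀ ≤ C → ∃ τ₀ > (0:ℝ), ∀ τ' : ℝ, 0 < τ' → τ' ≤ τ₀ →
      ∀ (x v : EuclideanSpace ℝ (Fin 2)) (X V : ℝ → EuclideanSpace ℝ (Fin 2)),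
        ‖v‖ ≤ M → X 0 = x → V 0 = v →
        (∀ t, HasDerivAt X (V t) t) →
        (∀ t, HasDerivAt V ((C / τ' * Λ (t / τ')) • W (X t)) t) →
        M + 1 ≤ ‖V τ'‖ := by
  have hCb : (0:ℝ) < Cb := lt_of_lt_of_le hc ((hWlow 0).trans (hWb 0))
  have hL0 : (0:ℝ) ≤ (LW : ℝ) := LW.coe_nonneg
  have hΛc : Continuous Λ := hΛsmooth.continuous
  have hWc : Continuous W := hWlip.continuous
  refine ⟨(2*M+2)/c, by positivity, fun C hC => ?_⟩
  have hC0 : (0:ℝ) < C := lt_of_lt_of_le (by positivity) hC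
  have hCc : 2*M+2 ≤ C*c := by
    rw [div_le_iff₀ hc] at hC; linarith
  refine ⟨1/(C*((LW:ℝ)+1)*(M + C*Cb+1)), by positivity,
    fun τ' hτ hτle x v X V hv hX0 hV0 hXd hVd => ?_⟩
  have hXc : Continuous X := continuous_iff_continuousAt.mpr fun t => (hXd t).continuousAt
  have hVc : Continuous V := continuous_iff_continuousAt.mpr fun t => (hVd t).continuousAt
  set φ : ℝ → ℝ := fun t => C / τ' * Λ (t / τ') with hφ
  have hφc : Continuous φ := continuous_const.mul (hΛc.comp (continuous_id.div_const _))
  have hφ0 : ∀ t, 0 ≤ φ t := fun t =>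
    mul_nonneg (div_nonneg hC0.le hτ.le) (hΛpos _)
  set g : ℝ → EuclideanSpace ℝ (Fin 2) := fun t => φ t • W (X t) with hg
  have hgc : Continuous g := hφc.smul (hWc.comp hXc)
  -- scalar integral computation
  have hφint : ∀ s : ℝ, ∫ t in (0:ℝ)..s, φ t = C * ∫ u in (0:ℝ)..s/τ', Λ u := by
    intro s
    rw [hφ]
    rw [intervalIntegral.integral_const_mul,
      intervalIntegral.integral_comp_div (f := Λ) (c := τ') hτ.ne']
    simp only [zero_div, smul_eq_mul]
    field_simp
  have hΛle : ∀ a : ℝ, 0 ≤ a → a ≤ 1 → ∫ t in (0:ℝ)..a, Λ t ≤ 1 := by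
    intro a ha0 ha1
    calc ∫ t in (0:ℝ)..a, Λ t ≤ ∫ t in (0:ℝ)..1, Λ t :=
          intervalIntegral.integral_mono_interval le_rfl ha0 ha1
            (Filter.Eventually.of_forall fun t => hΛpos t) (hΛc.intervalIntegrable _ _)
      _ = 1 := hΛint
  have hφle : ∀ s ∈ Icc (0:ℝ) τ', ∫ t in (0:ℝ)..s, φ t ≤ C := by
    intro s hs
    rw [hφint s]
    have h1 : ∫ u in (0:ℝ)..s/τ', Λ u ≤ 1 :=
      hΛle _ (div_nonneg hs.1 hτ.le) ((div_le_one hτ).2 hs.2)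
    nlinarith
  have hφC : ∫ t in (0:ℝ)..τ', φ t = C := by
    rw [hφint, div_self hτ.ne', hΛint, mul_one]
  -- FTC
  have hVeq : ∀ s : ℝ, ∫ t in (0:ℝ)..s, g t = V s - v := by
    intro s
    have := intervalIntegral.integral_eq_sub_of_hasDerivAt (f := V)
      (f' := g) (a := (0:ℝ)) (b := s) (fun t _ => hVd t) (hgc.intervalIntegrable _ _)
    rwa [hV0] at this
  have hXeq : ∀ s : ℝ, ∫ t in (0:ℝ)..s, V t = X s - x := by
    intro s
    have := intervalIntegral.integral_eq_sub_of_hasDerivAt (f := X)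
      (f' := V) (a := (0:ℝ)) (b := s) (fun t _ => hXd t) (hVc.intervalIntegrable _ _)
    rwa [hX0] at this
  -- velocity bound
  have hVb : ∀ s ∈ Icc (0:ℝ) τ', ‖V s‖ ≤ M + C * Cb := by
    intro s hs
    have h1 : V s = v + ∫ t in (0:ℝ)..s, g t := by rw [hVeq]; abel
    have h2 : ‖∫ t in (0:ℝ)..s, g t‖ ≤ ∫ t in (0:ℝ)..s, φ t * Cb := by
      refine (intervalIntegral.norm_integral_le_integral_norm hs.1).trans ?_
      refine intervalIntegral.integral_mono_on hs.1
        (hgc.norm.intervalIntegrable _ _) ((hφc.mul continuous_const).intervalIntegrable _ _)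
        fun t _ => ?_
      rw [hg, norm_smul, Real.norm_eq_abs, abs_of_nonneg (hφ0 t)]
      exact mul_le_mul_of_nonneg_left (hWb _) (hφ0 t)
    have h3 : ∫ t in (0:ℝ)..s, φ t * Cb ≤ C * Cb := by
      rw [intervalIntegral.integral_mul_const]
      exact mul_le_mul_of_nonneg_right (hφle s hs) hCb.le
    calc ‖V s‖ ≤ ‖v‖ + ‖∫ t in (0:ℝ)..s, g t‖ := by rw [h1]; exact norm_add_le _ _
      _ ≤ M + C * Cb := add_le_add hv (h2.trans h3)
  -- position bound
  have hXb : ∀ t ∈ Icc (0:ℝ) τ', ‖X t - x‖ ≤ τ' * (M + C * Cb) := by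
    intro t ht
    rw [← hXeq]
    refine (intervalIntegral.norm_integral_le_integral_norm ht.1).trans ?_
    have h2 : ∫ s in (0:ℝ)..t, ‖V s‖ ≤ ∫ s in (0:ℝ)..t, (M + C * Cb) := by
      refine intervalIntegral.integral_mono_on ht.1
        (hVc.norm.intervalIntegrable _ _) (intervalIntegrable_const) fun s hs => ?_
      exact hVb s ⟨hs.1, hs.2.trans ht.2⟩
    refine h2.trans ?_
    rw [intervalIntegral.integral_const, smul_eq_mul, sub_zero]
    exact mul_le_mul_of_nonneg_right ht.2 (by positivity)
  -- key estimate
  have hkey : ‖V τ' - (v + C • W x)‖ ≤ C * LW * (τ' * (M + C * Cb)) := by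
    have h2 : ∫ t in (0:ℝ)..τ', φ t • W x = C • W x := by
      rw [intervalIntegral.integral_smul_const, hφC]
    have h1 : V τ' - (v + C • W x) = ∫ t in (0:ℝ)..τ', φ t • (W (X t) - W x) := by
      have h3 : (fun t => φ t • (W (X t) - W x)) = fun t => g t - φ t • W x := by
        funext t; rw [smul_sub]
      rw [h3, intervalIntegral.integral_sub (hgc.intervalIntegrable _ _)
        ((show Continuous fun t => φ t • W x from hφc.smul continuous_const).intervalIntegrable _ _), h2, hVeq]
      abel
    rw [h1]
    have h4 : ‖∫ t in (0:ℝ)..τ', φ t • (W (X t) - W x)‖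
        ≤ ∫ t in (0:ℝ)..τ', φ t * ((LW : ℝ) * (τ' * (M + C * Cb))) := by
      refine (intervalIntegral.norm_integral_le_integral_norm hτ.le).trans ?_
      refine intervalIntegral.integral_mono_on hτ.le
        (((hφc.smul ((hWc.comp hXc).sub continuous_const)).norm).intervalIntegrable _ _)
        ((hφc.mul continuous_const).intervalIntegrable _ _) fun t ht => ?_
      rw [norm_smul, Real.norm_eq_abs, abs_of_nonneg (hφ0 t)]
      refine mul_le_mul_of_nonneg_left ?_ (hφ0 t)
      have h5 : ‖W (X t) - W x‖ ≤ (LW : ℝ) * ‖X t - x‖ := by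
        have := hWlip.dist_le_mul (X t) x
        rwa [dist_eq_norm, dist_eq_norm] at this
      exact h5.trans (mul_le_mul_of_nonneg_left (hXb t ht) hL0)
    refine h4.trans ?_
    rw [intervalIntegral.integral_mul_const, hφC]
    ring_nf
    exact le_rfl
  -- conclude
  have hτK : C * LW * (τ' * (M + C * Cb)) ≤ 1 := by
    have hK : (0:ℝ) < C * ((LW:ℝ)+1) * (M + C*Cb+1) := by positivity
    have h6 : C * LW * (τ' * (M + C * Cb)) ≤ C * ((LW:ℝ)+1) * (M + C*Cb+1) * τ' := by
      nlinarith [mul_nonneg (mul_nonneg hC0.le hτ.le)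
        (show (0:ℝ) ≤ (LW:ℝ) + M + C*Cb + 1 by positivity)]
    refine h6.trans ?_
    calc C * ((LW:ℝ)+1) * (M + C*Cb+1) * τ'
        ≤ C * ((LW:ℝ)+1) * (M + C*Cb+1) * (1/(C*((LW:ℝ)+1)*(M + C*Cb+1))) :=
          mul_le_mul_of_nonneg_left hτle hK.le
      _ = 1 := by field_simp
  have h7 : ‖v + C • W x‖ ≤ ‖V τ'‖ + ‖V τ' - (v + C • W x)‖ := by
    have := norm_sub_le (V τ') (V τ' - (v + C • W x))
    simpa using this
  have h8 : C * c - M ≤ ‖v + C • W x‖ := by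
    have h9 : ‖C • W x‖ ≤ ‖v + C • W x‖ + ‖v‖ := by
      have := norm_sub_le (v + C • W x) v
      simpa using this
    have h10 : C * c ≤ ‖C • W x‖ := by
      rw [norm_smul, Real.norm_eq_abs, abs_of_pos hC0]
      exact mul_le_mul_of_nonneg_left (hWlow x) hC0.le
    linarith
  linarith
end

section
/- Let γ^- and γ^+ be subsets of S(x_0,r_0) x R^2 with dist(γ^-, γ^+) > 0, and suppose a continuous characteristic curve t ↦ (X(t), V(t)) has the property that between any two visits to γ^- it must visit γ^+. Then the set of times t in [0,T] at which (X(t),V(t)) in γ^- is finite, with cardinality at most 1 + T · (sup speed of the curve in phase space) / dist(γ^-, γ^+). -/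
/-!
Two visits to `γ⁻` at times `a < b` are separated by a visit to `γ⁺` at some `u ∈ (a, b)`, so the
curve travels a distance at least `ε` in time `u - a < b - a`; hence `ε ≤ L (b - a)`. Times of
visit to `γ⁻` are therefore pairwise `ε / L` apart, and `t ↦ ⌊L t / ε⌋₊` maps them injectively
into `{0, …, ⌊L T / ε⌋₊}`.
-/

open Set

section SeparatedTimes

variable {K : Type*} [Field K] [LinearOrder K] [IsStrictOrderedRing K] [FloorSemiring K]
  {S : Set K} {T c : K}

theorem strictMonoOn_floor_mul_of_one_le_mul_sub (hc : 0 ≤ c) (hS : S ⊆ Icc 0 T)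
    (hgap : ∀ a ∈ S, ∀ b ∈ S, a < b → 1 ≤ c * (b - a)) :
    StrictMonoOn (fun t => ⌊c * t⌋₊) S := by
  intro a ha b hb hab
  have hca : 0 ≤ c * a := mul_nonneg hc (hS ha).1
  calc ⌊c * a⌋₊ < ⌊c * a⌋₊ + 1 := Nat.lt_succ_self _
    _ = ⌊c * a + 1⌋₊ := (Nat.floor_add_one hca).symm
    _ ≤ ⌊c * b⌋₊ := Nat.floor_le_floor (by linarith [hgap a ha b hb hab, mul_sub c b a])

theorem finite_and_ncard_le_of_one_le_mul_sub (hT : 0 ≤ T) (hc : 0 ≤ c) (hS : S ⊆ Icc 0 T)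
    (hgap : ∀ a ∈ S, ∀ b ∈ S, a < b → 1 ≤ c * (b - a)) :
    S.Finite ∧ (S.ncard : K) ≤ 1 + T * c := by
  have hinj := (strictMonoOn_floor_mul_of_one_le_mul_sub hc hS hgap).injOn
  have hmaps : MapsTo (fun t => ⌊c * t⌋₊) S (Finset.range (⌊c * T⌋₊ + 1)) := fun t ht => by
    simpa [Nat.lt_succ_iff] using Nat.floor_le_floor (mul_le_mul_of_nonneg_left (hS ht).2 hc)
  refine ⟨Finite.of_injOn hmaps hinj (Finset.finite_toSet _), ?_⟩
  have hcard : S.ncard ≤ ⌊c * T⌋₊ + 1 := by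
    simpa using ncard_le_ncard_of_injOn _ hmaps hinj
  calc (S.ncard : K) ≤ ⌊c * T⌋₊ + 1 := by exact_mod_cast hcard
    _ ≤ c * T + 1 := by gcongr; exact Nat.floor_le (mul_nonneg hc hT)
    _ = 1 + T * c := by ring

end SeparatedTimes

/-- If a Lipschitz curve in phase space must visit `γ⁺` between any two visits to `γ⁻`, and
`dist(γ⁻, γ⁺) ≥ ε > 0`, then the set of times in `[0,T]` spent in `γ⁻` is finite, of
cardinality at most `1 + T·(phase-space speed)/ε`. -/
theorem statement15 (T : ℝ) (hT : 0 ≤ T)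
    (γm γp : Set ((ℝ × ℝ) × (ℝ × ℝ)))
    (ε : ℝ) (hε : 0 < ε) (hsep : ∀ a ∈ γm, ∀ b ∈ γp, ε ≤ dist a b)
    (Z : ℝ → (ℝ × ℝ) × (ℝ × ℝ)) (Lz : NNReal) (hZ : LipschitzWith Lz Z)
    (hvisit : ∀ t t' : ℝ, t < t' → Z t ∈ γm → Z t' ∈ γm →
      ∃ u ∈ Ioo t t', Z u ∈ γp) :
    {t ∈ Icc (0:ℝ) T | Z t ∈ γm}.Finite ∧
    (({t ∈ Icc (0:ℝ) T | Z t ∈ γm}.ncard : ℝ) ≤ 1 + T * Lz / ε) := by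
  have hgap : ∀ a ∈ {t ∈ Icc (0:ℝ) T | Z t ∈ γm}, ∀ b ∈ {t ∈ Icc (0:ℝ) T | Z t ∈ γm},
      a < b → 1 ≤ (Lz / ε) * (b - a) := by
    rintro a ⟨-, ha⟩ b ⟨-, hb⟩ hab
    obtain ⟨u, hu, hup⟩ := hvisit a b hab ha hb
    rw [div_mul_eq_mul_div, one_le_div hε]
    calc ε ≤ dist (Z a) (Z u) := hsep _ ha _ hup
      _ ≤ Lz * dist a u := hZ.dist_le_mul a u
      _ = Lz * (u - a) := by rw [Real.dist_eq, abs_sub_comm, abs_of_pos (sub_pos.2 hu.1)]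
      _ ≤ Lz * (b - a) := by gcongr; exact hu.2.le
  rw [mul_div_assoc]
  exact finite_and_ncard_le_of_one_le_mul_sub hT (by positivity) (fun t ht => ht.1) hgap
end

section
/- Let α > 0 and let (X,V) be characteristics on T^2 for a force bounded by C, with |V(t_0)| >= α and X(t_0) in B(x_0, r_0/2). Suppose α is large enough compared to C and r_0 (specifically α >= max(600 r_0/T, C') for suitable C' depending on C, r_0). Then there exist s in (0, 3r_0/α] and a time σ in [t_0 - 2s, t_0] such that X(σ) in S(x_0, r_0) and V(σ)·ν(X(σ)) <= -|V(σ)|/5, i.e. the characteristic crossed the circle S(x_0,r_0) entering inward with incidence angle bounded away from tangential. -/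
/-!
Over the time window `[t₀ - 3r/α, t₀]` the force `F`, bounded by `C`, moves the velocity by at
most `3Cr/α` and the position away from the straight line `X t₀ + (t - t₀) V t₀` by at most
`9Cr²/α²`; for `α² ≥ 900 C r` both errors are negligible. Going backwards along that line the
characteristic leaves the disc of radius `r` around `x₀`, so by the intermediate value theorem it
meets the circle `S(x₀, r)` at some time `σ`. A line through a point `q` of the smaller disc
`‖q‖ ≤ 0.51 r` meets the circle at an angle bounded away from tangency
(`⟪v, p⟫ ≤ -0.7 ‖v‖ r`), and this survives the small change of velocity.
-/

open Set
open scoped RealInnerProductSpace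

/-- Euclidean norm of a planar vector. -/
noncomputable def nrm2 (v : ℝ × ℝ) : ℝ := Real.sqrt (v.1 ^ 2 + v.2 ^ 2)

/-- Planar dot product. -/
def dot2 (v w : ℝ × ℝ) : ℝ := v.1 * w.1 + v.2 * w.2

section InnerProductSpace

variable {E : Type*} [NormedAddCommGroup E] [InnerProductSpace ℝ E]

lemma norm_sub_le_of_forall_hasDerivAt {f f' : ℝ → E} {C : ℝ}
    (hf : ∀ t, HasDerivAt f (f' t) t) (hC : ∀ t, ‖f' t‖ ≤ C) (s t : ℝ) :
    ‖f t - f s‖ ≤ C * |t - s| :=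
  convex_univ.norm_image_sub_le_of_norm_hasDerivWithin_le (fun u _ => (hf u).hasDerivWithinAt)
    (fun u _ => hC u) (mem_univ s) (mem_univ t)

lemma norm_sub_sub_smul_le_of_forall_hasDerivAt {Y W G : ℝ → E} {C : ℝ}
    (hY : ∀ t, HasDerivAt Y (W t) t) (hW : ∀ t, HasDerivAt W (G t) t) (hG : ∀ t, ‖G t‖ ≤ C)
    (t₀ t : ℝ) :
    ‖Y t - Y t₀ - (t - t₀) • W t₀‖ ≤ C * (t - t₀) ^ 2 := by
  have hC : 0 ≤ C := (norm_nonneg _).trans (hG 0)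
  have hline : ∀ u, HasDerivAt (fun u => Y u - (u - t₀) • W t₀) (W u - W t₀) u := fun u => by
    simpa using (hY u).fun_sub (((hasDerivAt_id u).sub_const t₀).smul_const (W t₀))
  have hdrift : ∀ u ∈ uIcc t₀ t, ‖W u - W t₀‖ ≤ C * |t - t₀| := fun u hu =>
    (norm_sub_le_of_forall_hasDerivAt hW hG t₀ u).trans
      (mul_le_mul_of_nonneg_left (abs_sub_left_of_mem_uIcc hu) hC)
  have := (convex_uIcc t₀ t).norm_image_sub_le_of_norm_hasDerivWithin_le
    (fun u _ => (hline u).hasDerivWithinAt) hdrift left_mem_uIcc right_mem_uIcc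
  simpa [sub_right_comm _ (Y t₀), Real.norm_eq_abs, mul_assoc, ← sq] using this

/-- At the point `p = q - h • v` where the ray from `q` in direction `-v` leaves the sphere of
radius `r > ‖q‖`, `⟪v, p⟫ ≤ 0` and `⟪v, p⟫² = ⟪v, q⟫² + ‖v‖² (r² - ‖q‖²)`. -/
lemma inner_sub_smul_le_of_norm_sub_smul_eq {q v : E} {h r c : ℝ} (hh : 0 ≤ h)
    (hp : ‖q - h • v‖ = r) (hc : 0 < c) (hcr : c ^ 2 + ‖q‖ ^ 2 ≤ r ^ 2) :
    ⟪v, q - h • v⟫ ≤ -(c * ‖v‖) := by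
  have hsphere : r ^ 2 = ‖q‖ ^ 2 - 2 * (h * ⟪v, q⟫) + h ^ 2 * ‖v‖ ^ 2 := by
    rw [← hp, norm_sub_sq_real, real_inner_smul_right, norm_smul, Real.norm_eq_abs, mul_pow,
      sq_abs, real_inner_comm]
  have hinner : ⟪v, q - h • v⟫ = ⟪v, q⟫ - h * ‖v‖ ^ 2 := by
    rw [inner_sub_right, real_inner_smul_right, real_inner_self_eq_norm_sq]
  have hsq : ⟪v, q - h • v⟫ ^ 2 = ⟪v, q⟫ ^ 2 + ‖v‖ ^ 2 * (r ^ 2 - ‖q‖ ^ 2) := by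
    rw [hinner]; linear_combination (-‖v‖ ^ 2) * hsphere
  have hnonpos : ⟪v, q - h • v⟫ ≤ 0 := by
    rw [hinner]; nlinarith [sq_nonneg ‖v‖, mul_nonneg hh (sq_nonneg ‖v‖)]
  nlinarith [sq_nonneg ⟪v, q⟫, mul_nonneg hc.le (norm_nonneg v), sq_nonneg ‖v‖]

lemma inner_le_neg_div_five_of_norm_sub_le {v w p : E}
    (hv : ⟪v, p⟫ ≤ -(7 / 10 * (‖v‖ * ‖p‖))) (hw : 300 * ‖w - v‖ ≤ ‖v‖) :
    ⟪w, p⟫ ≤ -(‖w‖ * ‖p‖) / 5 := by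
  have hinner : ⟪w - v, p⟫ ≤ ‖w - v‖ * ‖p‖ := real_inner_le_norm _ _
  have hnorm : ‖w‖ ≤ ‖v‖ + ‖w - v‖ := norm_le_insert' w v
  rw [inner_sub_left] at hinner
  nlinarith [norm_nonneg p, mul_nonneg (norm_nonneg v) (norm_nonneg p)]

theorem exists_inward_crossing {Y W G : ℝ → E} {C r α t₀ : ℝ}
    (hY : ∀ t, HasDerivAt Y (W t) t) (hW : ∀ t, HasDerivAt W (G t) t) (hG : ∀ t, ‖G t‖ ≤ C)
    (hr : 0 < r) (hα : 0 < α) (hαC : 900 * C * r ≤ α ^ 2) (hW₀ : α ≤ ‖W t₀‖)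
    (hY₀ : ‖Y t₀‖ ≤ r / 2) :
    ∃ σ ∈ Icc (t₀ - 3 * r / α) t₀, ‖Y σ‖ = r ∧ ⟪W σ, Y σ⟫ ≤ -(‖W σ‖ * r) / 5 := by
  set τ := 3 * r / α with hτ_def
  have hτ : 0 < τ := by positivity
  have hC : 0 ≤ C := (norm_nonneg _).trans (hG 0)
  have hCτ : 300 * (C * τ) ≤ α := by
    rw [hτ_def, show 300 * (C * (3 * r / α)) = 900 * C * r / α by ring, div_le_iff₀ hα]
    nlinarith
  have hτα : τ * α = 3 * r := by rw [hτ_def]; field_simp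
  have hwindow : ∀ t ∈ Icc (t₀ - τ) t₀, |t - t₀| ≤ τ := fun t ht => by
    rw [abs_le]; constructor <;> linarith [ht.1, ht.2]
  have hdrift : ∀ t ∈ Icc (t₀ - τ) t₀, 300 * ‖W t - W t₀‖ ≤ α := fun t ht => by
    have := norm_sub_le_of_forall_hasDerivAt hW hG t₀ t
    nlinarith [mul_le_mul_of_nonneg_left (hwindow t ht) hC]
  have hline : ∀ t ∈ Icc (t₀ - τ) t₀, ‖Y t - Y t₀ - (t - t₀) • W t₀‖ ≤ r / 100 := fun t ht => by
    have := norm_sub_sub_smul_le_of_forall_hasDerivAt hY hW hG t₀ t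
    obtain ⟨hlo, hhi⟩ := abs_le.1 (hwindow t ht)
    have hsq : (t - t₀) ^ 2 ≤ τ ^ 2 := sq_le_sq' hlo hhi
    nlinarith [mul_le_mul_of_nonneg_left hsq hC]
  have hstart : t₀ - τ ∈ Icc (t₀ - τ) t₀ := left_mem_Icc.2 (by linarith)
  have hexit : r ≤ ‖Y (t₀ - τ)‖ := by
    have hfar : 3 * r ≤ ‖τ • W t₀‖ := by
      rw [norm_smul, Real.norm_of_nonneg hτ.le, ← hτα]
      exact mul_le_mul_of_nonneg_left hW₀ hτ.le
    have hsplit : τ • W t₀ = Y t₀ - Y (t₀ - τ) + (Y (t₀ - τ) - Y t₀ - (t₀ - τ - t₀) • W t₀) := by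
      rw [show t₀ - τ - t₀ = -τ by ring, neg_smul]; abel
    have : ‖τ • W t₀‖ ≤ ‖Y t₀‖ + ‖Y (t₀ - τ)‖ + ‖Y (t₀ - τ) - Y t₀ - (t₀ - τ - t₀) • W t₀‖ := by
      rw [hsplit]; exact (norm_add_le _ _).trans (add_le_add_left (norm_sub_le _ _) _)
    linarith [hline _ hstart]
  obtain ⟨σ, hσ, hσr⟩ : ∃ σ ∈ Icc (t₀ - τ) t₀, ‖Y σ‖ = r :=
    intermediate_value_Icc' (by linarith)
      (continuous_iff_continuousAt.2 fun t => (hY t).continuousAt).norm.continuousOn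
      ⟨by linarith, hexit⟩
  refine ⟨σ, hσ, hσr, ?_⟩
  have hYσ : Y t₀ + (Y σ - Y t₀ - (σ - t₀) • W t₀) - (t₀ - σ) • W t₀ = Y σ := by
    rw [show σ - t₀ = -(t₀ - σ) by ring, neg_smul]; abel
  set q := Y t₀ + (Y σ - Y t₀ - (σ - t₀) • W t₀)
  have hq : ‖q‖ ≤ r / 2 + r / 100 := (norm_add_le _ _).trans (add_le_add hY₀ (hline σ hσ))
  have hangle : ⟪W t₀, Y σ⟫ ≤ -(7 / 10 * (‖W t₀‖ * ‖Y σ‖)) := by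
    rw [← hYσ] at hσr ⊢
    have := inner_sub_smul_le_of_norm_sub_smul_eq (sub_nonneg.2 hσ.2) hσr
      (by positivity : 0 < 7 / 10 * r) (by nlinarith [norm_nonneg q])
    rw [hσr]; linarith
  have := inner_le_neg_div_five_of_norm_sub_le hangle ((hdrift σ hσ).trans hW₀)
  rwa [hσr] at this

end InnerProductSpace

lemma nrm2_eq_norm_toLp (v : ℝ × ℝ) : nrm2 v = ‖WithLp.toLp 2 v‖ := by
  simp [nrm2, WithLp.prod_norm_eq_of_L2]

lemma dot2_eq_inner_toLp (v w : ℝ × ℝ) : dot2 v w = ⟪WithLp.toLp 2 v, WithLp.toLp 2 w⟫ := by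
  simp [dot2, mul_comm]

lemma HasDerivAt.toLp_two {f : ℝ → ℝ × ℝ} {f' : ℝ × ℝ} {t : ℝ} (hf : HasDerivAt f f' t) :
    HasDerivAt (fun t => WithLp.toLp 2 (f t)) (WithLp.toLp 2 f') t :=
  (WithLp.prodContinuousLinearEquiv 2 ℝ ℝ ℝ).symm.hasFDerivAt.comp_hasDerivAt t hf

theorem statement16_general (r₀ T C : ℝ) (hr₀ : 0 < r₀) (hC : 0 ≤ C) :
    ∃ C' : ℝ, 0 < C' ∧ ∀ α : ℝ, max (600 * r₀ / T) C' ≤ α →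
      ∀ (x₀ : ℝ × ℝ) (X V F : ℝ → ℝ × ℝ),
        (∀ t, HasDerivAt X (V t) t) →
        (∀ t, HasDerivAt V (F t) t) →
        (∀ t, nrm2 (F t) ≤ C) →
        ∀ t₀ : ℝ, α ≤ nrm2 (V t₀) → nrm2 (X t₀ - x₀) ≤ r₀ / 2 →
        ∃ s : ℝ, 0 < s ∧ s ≤ 3 * r₀ / α ∧
          ∃ σ ∈ Set.Icc (t₀ - 2 * s) t₀,
            nrm2 (X σ - x₀) = r₀ ∧
            dot2 (V σ) (X σ - x₀) / r₀ ≤ -(nrm2 (V σ)) / 5 := by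
  refine ⟨900 * C * r₀ + 1, by positivity, fun α hα x₀ X V F hX hV hF t₀ hVα hX₀ => ?_⟩
  have hα₁ : 900 * C * r₀ + 1 ≤ α := (le_max_right _ _).trans hα
  have hα₀ : 0 < α := by linarith [mul_nonneg (mul_nonneg (by norm_num : (0:ℝ) ≤ 900) hC) hr₀.le]
  simp only [nrm2_eq_norm_toLp, dot2_eq_inner_toLp] at *
  obtain ⟨σ, hσ, hσr, hσv⟩ := exists_inward_crossing
    (fun t => ((hX t).sub_const x₀).toLp_two) (fun t => (hV t).toLp_two) hF hr₀ hα₀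
    (by nlinarith) hVα hX₀
  refine ⟨3 * r₀ / (2 * α), by positivity, by gcongr; linarith, σ, ?_, hσr, ?_⟩
  · rwa [show 2 * (3 * r₀ / (2 * α)) = 3 * r₀ / α by field_simp]
  · rw [div_le_iff₀ hr₀]; linarith

/-- A characteristic with speed `≥ α` (α large compared to the force bound `C` and `r₀`)
located in `B(x₀, r₀/2)` at time `t₀` must have crossed the circle `S(x₀, r₀)` shortly
before `t₀`, entering inward with incidence `v·ν ≤ -|v|/5`. -/
theorem statement16 (r₀ T C : ℝ) (hr₀ : 0 < r₀) (hT : 0 < T) (hC : 0 ≤ C) :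
    ∃ C' : ℝ, 0 < C' ∧ ∀ α : ℝ, max (600 * r₀ / T) C' ≤ α →
      ∀ (x₀ : ℝ × ℝ) (X V F : ℝ → ℝ × ℝ),
        (∀ t, HasDerivAt X (V t) t) →
        (∀ t, HasDerivAt V (F t) t) →
        (∀ t, nrm2 (F t) ≤ C) →
        ∀ t₀ : ℝ, α ≤ nrm2 (V t₀) → nrm2 (X t₀ - x₀) ≤ r₀ / 2 →
        ∃ s : ℝ, 0 < s ∧ s ≤ 3 * r₀ / α ∧
          ∃ σ ∈ Set.Icc (t₀ - 2 * s) t₀,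
            nrm2 (X σ - x₀) = r₀ ∧
            dot2 (V σ) (X σ - x₀) / r₀ ≤ -(nrm2 (V σ)) / 5 :=
  statement16_general r₀ T C hr₀ hC
end
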